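/- arXiv:1405.1303 — 4 statements merged into one kernel-verified Lean document; each statement's English description precedes it below -/
import Mathlib

section
/- Let u_1, ..., u_n be non-zero vectors in R^d such that for some 0 ≤ α < π/2 the angle between any two vectors u_i and u_j does not exceed α. Then the norm of u = u_1 + ... + u_n satisfies ‖u‖ ≥ sqrt(cos α) · (‖u_1‖ + ... + ‖u_n‖). -/
/-!
If every pairwise angle is at most `α ≤ π`, then `⟪u i, u j⟫ ≥ cos α ‖u i‖ ‖u j‖` for all `i, j`.
Expanding `‖∑ u i‖² = ∑ᵢ ∑ⱼ ⟪u i, u j⟫` and comparing termwise with `cos α (∑ ‖u i‖)²`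
gives the squared inequality, and taking square roots finishes the proof.
-/

open Finset InnerProductGeometry

theorem InnerProductGeometry.cos_mul_norm_mul_norm_le_inner_of_angle_le
    {V : Type*} [NormedAddCommGroup V] [InnerProductSpace ℝ V] {x y : V} {α : ℝ}
    (hangle : angle x y ≤ α) (hα : α ≤ Real.pi) :
    Real.cos α * (‖x‖ * ‖y‖) ≤ inner ℝ x y := by
  rw [← cos_angle_mul_norm_mul_norm]
  gcongr
  exact Real.cos_le_cos_of_nonneg_of_le_pi (angle_nonneg x y) hα hangle

section SumNorm

variable {ι V : Type*} [SeminormedAddCommGroup V] [InnerProductSpace ℝ V]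
  {s : Finset ι} {u : ι → V} {c : ℝ}

theorem mul_sq_sum_norm_le_norm_sum_sq
    (h : ∀ i ∈ s, ∀ j ∈ s, c * (‖u i‖ * ‖u j‖) ≤ inner ℝ (u i) (u j)) :
    c * (∑ i ∈ s, ‖u i‖) ^ 2 ≤ ‖∑ i ∈ s, u i‖ ^ 2 := calc
  c * (∑ i ∈ s, ‖u i‖) ^ 2 = ∑ i ∈ s, ∑ j ∈ s, c * (‖u i‖ * ‖u j‖) := by
    rw [sq, sum_mul_sum, mul_sum]
    simp only [mul_sum]
  _ ≤ ∑ i ∈ s, ∑ j ∈ s, inner ℝ (u i) (u j) :=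
    sum_le_sum fun i hi => sum_le_sum fun j hj => h i hi j hj
  _ = ‖∑ i ∈ s, u i‖ ^ 2 := by
    rw [← real_inner_self_eq_norm_sq, sum_inner]
    simp only [inner_sum]

theorem sqrt_mul_sum_norm_le_norm_sum
    (h : ∀ i ∈ s, ∀ j ∈ s, c * (‖u i‖ * ‖u j‖) ≤ inner ℝ (u i) (u j)) :
    Real.sqrt c * ∑ i ∈ s, ‖u i‖ ≤ ‖∑ i ∈ s, u i‖ := calc
  Real.sqrt c * ∑ i ∈ s, ‖u i‖ = Real.sqrt (c * (∑ i ∈ s, ‖u i‖) ^ 2) := by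
    rw [Real.sqrt_mul' c (sq_nonneg _), Real.sqrt_sq (sum_nonneg fun i _ => norm_nonneg _)]
  _ ≤ Real.sqrt (‖∑ i ∈ s, u i‖ ^ 2) := Real.sqrt_le_sqrt (mul_sq_sum_norm_le_norm_sum_sq h)
  _ = ‖∑ i ∈ s, u i‖ := Real.sqrt_sq (norm_nonneg _)

end SumNorm

theorem sum_norm_lower_bound_of_angle_le_general
    (d n : ℕ) (u : Fin n → EuclideanSpace ℝ (Fin d)) (α : ℝ)
    (hα : α < Real.pi / 2)
    (hangle : ∀ i j, InnerProductGeometry.angle (u i) (u j) ≤ α) :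
    ‖∑ i, u i‖ ≥ Real.sqrt (Real.cos α) * ∑ i, ‖u i‖ := by
  have hα_le_pi : α ≤ Real.pi := by linarith [Real.pi_pos]
  exact sqrt_mul_sum_norm_le_norm_sum fun i _ j _ =>
    cos_mul_norm_mul_norm_le_inner_of_angle_le (hangle i j) hα_le_pi

theorem sum_norm_lower_bound_of_angle_le
    (d n : ℕ) (u : Fin n → EuclideanSpace ℝ (Fin d)) (α : ℝ)
    (hu : ∀ i, u i ≠ 0) (hα0 : 0 ≤ α) (hα : α < Real.pi / 2)
    (hangle : ∀ i j, InnerProductGeometry.angle (u i) (u j) ≤ α) :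
    ‖∑ i, u i‖ ≥ Real.sqrt (Real.cos α) * ∑ i, ‖u i‖ :=
  sum_norm_lower_bound_of_angle_le_general d n u α hα hangle
end

section
/- Let A = (a_ij) be an n × n complex matrix and let g(z) = per(J + z(A - J)). Then for every k ≥ 1, the k-th derivative of g at z = 0 equals (n-k)! times the sum, over all pairs of ordered k-tuples (i_1,...,i_k) and (j_1,...,j_k) of distinct indices from {1,...,n}, of the product (a_{i_1 j_1} - 1) ⋯ (a_{i_k j_k} - 1). In particular the k-th derivative vanishes for k > n. -/
/-!
Write `C = A - J`. Expanding every factor of `∏ i, (1 + z * C i (σ i))` over subsets shows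
that `g` is a polynomial whose `k`-th Taylor coefficient is
`∑ σ, ∑ |S| = k, ∏ i ∈ S, C i (σ i)`, so the `k`-th derivative at `0` is `k!` times that
sum; in particular it vanishes for `k > n`. Each `k`-subset is the image of exactly `k!` ordered
`k`-tuples of distinct indices, and for every such tuple `a`, as `σ` runs over the permutations,
`σ ∘ a` takes each injective value `b` exactly `(n - k)!` times.
-/

/-- The permanent of a square matrix. -/
noncomputable def perm {n : ℕ} (A : Matrix (Fin n) (Fin n) ℂ) : ℂ :=
  ∑ σ : Equiv.Perm (Fin n), ∏ i, A i (σ i)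

open Finset Function Nat

section Counting

variable {ι α : Type*} [Fintype ι] [Fintype α] [DecidableEq α]

theorem card_perm_comp_eq_self {a : ι → α} (ha : Injective a) :
    #{σ : Equiv.Perm α | ⇑σ ∘ a = a} = (Fintype.card α - Fintype.card ι)! := by
  -- the double negation is the shape expected by `Equiv.Perm.subtypeEquivSubtypePerm`
  have fixes_range : ∀ σ : Equiv.Perm α,
      ⇑σ ∘ a = a ↔ ∀ x, ¬ (x ∉ Set.range a) → σ x = x := by
    intro σ
    simp only [not_not, Set.forall_mem_range, funext_iff, comp_apply]
  rw [← Fintype.card_subtype, Fintype.card_congr ((Equiv.subtypeEquivRight fixes_range).trans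
    (Equiv.Perm.subtypeEquivSubtypePerm _).symm), Fintype.card_perm,
    Fintype.card_subtype_compl, Set.card_range_of_injective ha]

theorem card_perm_comp_eq {a b : ι → α} (ha : Injective a) (hb : Injective b) :
    #{σ : Equiv.Perm α | ⇑σ ∘ a = b} = (Fintype.card α - Fintype.card ι)! := by
  obtain ⟨τ, hτ⟩ := Equiv.Perm.exists_extending_pair a b ha hb
  replace hτ : ⇑τ ∘ a = b := funext hτ
  rw [← card_perm_comp_eq_self ha]
  refine card_nbij' (τ⁻¹ * ·) (τ * ·) ?_ ?_ (fun σ _ => by simp) (fun σ _ => by simp)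
  · intro σ hσ
    simp only [mem_coe, mem_filter_univ] at hσ ⊢
    rw [Equiv.Perm.coe_mul, comp_assoc, hσ, ← hτ, ← comp_assoc, Equiv.Perm.coe_inv,
      Equiv.symm_comp_self, id_comp]
  · intro σ hσ
    simp only [mem_coe, mem_filter_univ] at hσ ⊢
    rw [Equiv.Perm.coe_mul, comp_assoc, hσ, hτ]

theorem sum_perm_comp [DecidableEq ι] {M : Type*} [AddCommMonoid M] (f : (ι → α) → M)
    {a : ι → α} (ha : Injective a) :
    ∑ σ : Equiv.Perm α, f (⇑σ ∘ a) =
      (Fintype.card α - Fintype.card ι)! • ∑ b with Injective b, f b := by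
  rw [← sum_fiberwise_of_maps_to (g := fun σ : Equiv.Perm α => ⇑σ ∘ a)
    (fun σ _ => (mem_filter_univ _).mpr (σ.injective.comp ha)), smul_sum]
  refine sum_congr rfl fun b hb => ?_
  rw [sum_congr rfl fun σ hσ => congrArg f (mem_filter.mp hσ).2, sum_const,
    card_perm_comp_eq ha ((mem_filter_univ b).mp hb)]

theorem card_injective_image_eq [DecidableEq ι] {S : Finset α} (hS : #S = Fintype.card ι) :
    #{a : ι → α | Injective a ∧ univ.image a = S} = (Fintype.card ι)! := by
  have card_emb : Fintype.card (ι ↪ S) = (Fintype.card ι)! := by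
    rw [Fintype.card_embedding_eq, Fintype.card_coe, hS, descFactorial_self]
  rw [← card_emb, ← Finset.card_univ]
  refine card_bij' (fun a ha => ⟨fun t => ⟨a t, ?_⟩, fun s t h => ?_⟩)
    (fun e _ => Subtype.val ∘ e) (fun _ _ => mem_univ _) ?_ (fun _ _ => rfl) (fun _ _ => rfl)
  · obtain ⟨-, hS⟩ := (mem_filter_univ a).mp ha
    exact hS ▸ mem_image_of_mem a (mem_univ t)
  · exact ((mem_filter_univ a).mp ha).1 (congrArg Subtype.val h)
  · intro e _
    have he : Injective (Subtype.val ∘ e) := Subtype.val_injective.comp e.injective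
    refine (mem_filter_univ _).mpr ⟨he, eq_of_subset_of_card_le ?_ ?_⟩
    · intro x hx
      obtain ⟨t, -, rfl⟩ := mem_image.mp hx
      exact (e t).2
    · rw [hS, card_image_of_injective _ he, Finset.card_univ]

theorem sum_injective_image [DecidableEq ι] {M : Type*} [AddCommMonoid M] (f : Finset α → M) :
    ∑ a : ι → α with Injective a, f (univ.image a) =
      (Fintype.card ι)! • ∑ S ∈ powersetCard (Fintype.card ι) univ, f S := by
  rw [← sum_fiberwise_of_maps_to (g := fun a : ι → α => univ.image a)
    (t := powersetCard (Fintype.card ι) univ) fun a ha => mem_powersetCard_univ.mpr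
      (by rw [card_image_of_injective _ ((mem_filter_univ a).mp ha), Finset.card_univ]),
    smul_sum]
  refine sum_congr rfl fun S hS => ?_
  rw [sum_congr rfl fun a ha => congrArg f (mem_filter.mp ha).2, sum_const, filter_filter,
    card_injective_image_eq (mem_powersetCard_univ.mp hS)]

theorem sum_injective_prod [DecidableEq ι] {R : Type*} [CommSemiring R] (F : α → R) :
    ∑ a : ι → α with Injective a, ∏ t, F (a t) =
      (Fintype.card ι)! • ∑ S ∈ powersetCard (Fintype.card ι) univ, ∏ i ∈ S, F i := by
  rw [← sum_injective_image]
  exact sum_congr rfl fun a ha => (prod_image fun s _ t _ hst => (mem_filter_univ a).mp ha hst).symm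

end Counting

theorem prod_one_add_mul_eq_sum_powerset {α R : Type*} [CommSemiring R] (s : Finset α)
    (c : α → R) (z : R) :
    ∏ i ∈ s, (1 + z * c i) = ∑ t ∈ s.powerset, (∏ i ∈ t, c i) * z ^ #t := by
  simp only [prod_one_add, prod_mul_distrib, prod_const, mul_comm]

theorem iteratedDeriv_sum_mul_pow_zero {ι 𝕜 : Type*} [NontriviallyNormedField 𝕜]
    (s : Finset ι) (c : ι → 𝕜) (m : ι → ℕ) (k : ℕ) :
    iteratedDeriv k (fun z => ∑ i ∈ s, c i * z ^ m i) 0 =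
      k ! * ∑ i ∈ s with m i = k, c i := by
  rw [iteratedDeriv_fun_sum fun i _ => (contDiff_const.mul (contDiff_id.pow _)).contDiffAt,
    sum_filter, mul_sum]
  refine sum_congr rfl fun i _ => ?_
  rw [iteratedDeriv_const_mul_field, iteratedDeriv_fun_pow_zero]
  split_ifs <;> simp_all [mul_comm]

theorem iteratedDeriv_perm_one_add_mul_zero {n : ℕ} (B : Matrix (Fin n) (Fin n) ℂ) (k : ℕ) :
    iteratedDeriv k (fun z => perm fun i j => 1 + z * B i j) 0 =
      k ! * ∑ σ : Equiv.Perm (Fin n), ∑ S ∈ powersetCard k univ,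
        ∏ i ∈ S, B i (σ i) := by
  have expand : (fun z => perm fun i j => 1 + z * B i j) = fun z =>
      ∑ p ∈ (univ : Finset (Equiv.Perm (Fin n))) ×ˢ univ.powerset,
        (∏ i ∈ p.2, B i (p.1 i)) * z ^ #p.2 := by
    funext z
    simp only [perm, prod_one_add_mul_eq_sum_powerset, sum_product]
  rw [expand, iteratedDeriv_sum_mul_pow_zero, sum_filter, sum_product]
  simp only [powersetCard_eq_filter, sum_filter]

theorem iteratedDeriv_perm_interpolation (n : ℕ) (A : Matrix (Fin n) (Fin n) ℂ)
    (g : ℂ → ℂ) (hg : ∀ z, g z = perm (fun i j => 1 + z * (A i j - 1))) :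
    (∀ k : ℕ, 1 ≤ k →
      iteratedDeriv k g 0 =
        (Nat.factorial (n - k) : ℂ) *
          ∑ a ∈ Finset.univ.filter (fun a : Fin k → Fin n => Function.Injective a),
            ∑ b ∈ Finset.univ.filter (fun b : Fin k → Fin n => Function.Injective b),
              ∏ t, (A (a t) (b t) - 1)) ∧
    ∀ k : ℕ, n < k → iteratedDeriv k g 0 = 0 := by
  obtain rfl : g = fun z => perm fun i j => 1 + z * (A i j - 1) := funext hg
  refine ⟨fun k _ => ?_, fun k hk => ?_⟩
  · calc iteratedDeriv k (fun z => perm fun i j => 1 + z * (A i j - 1)) 0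
        = ∑ σ : Equiv.Perm (Fin n),
            (k ! : ℂ) * ∑ S ∈ powersetCard k univ, ∏ i ∈ S, (A i (σ i) - 1) := by
          rw [iteratedDeriv_perm_one_add_mul_zero (fun i j => A i j - 1), mul_sum]
      _ = ∑ σ : Equiv.Perm (Fin n), ∑ a : Fin k → Fin n with Injective a,
            ∏ t, (A (a t) (σ (a t)) - 1) :=
          sum_congr rfl fun σ _ => by
            simpa using (sum_injective_prod (ι := Fin k) fun i => A i (σ i) - 1).symm
      _ = ∑ a : Fin k → Fin n with Injective a, ∑ σ : Equiv.Perm (Fin n),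
            ∏ t, (A (a t) (σ (a t)) - 1) := sum_comm
      _ = _ := by
          rw [mul_sum]
          exact sum_congr rfl fun a ha => by
            simpa using sum_perm_comp (fun b => ∏ t, (A (a t) (b t) - 1)) (mem_filter.mp ha).2
  · rw [iteratedDeriv_perm_one_add_mul_zero (fun i j => A i j - 1),
      powersetCard_eq_empty.mpr (by simpa)]
    simp
end

section
/- There is an absolute constant δ > 0 (one can take δ = 0.195) such that if Z = (z_ij) is an n × n complex matrix satisfying |z_ij - 1| ≤ δ for all i, j, then per Z ≠ 0. -/
open Equiv Finset ComplexConjugate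
open scoped InnerProductSpace

namespace Matrix

variable {R : Type*} [CommSemiring R]

theorem permanent_succ_column_zero {n : ℕ} (A : Matrix (Fin (n + 1)) (Fin (n + 1)) R) :
    A.permanent = ∑ i, A i 0 * (A.submatrix i.succAbove Fin.succ).permanent := by
  rw [permanent, ← (Perm.decomposeFin (n := n)).symm.sum_comp, Fintype.sum_prod_type]
  refine sum_congr rfl fun i _ => ?_
  simp only [Fin.prod_univ_succ, Perm.decomposeFin_symm_apply_zero,
    Perm.decomposeFin_symm_apply_succ, ← mul_sum]
  congr 1
  cases i using Fin.cases with
  | zero => simp [permanent]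
  | succ i =>
    rw [← permanent_permute_cols i.cycleRange]
    simp [permanent, Fin.succAbove_cycleRange]

theorem permanent_succ_column {n : ℕ} (A : Matrix (Fin (n + 1)) (Fin (n + 1)) R)
    (j : Fin (n + 1)) :
    A.permanent = ∑ i, A i j * (A.submatrix i.succAbove j.succAbove).permanent := by
  rw [← permanent_permute_rows j.cycleRange.symm, permanent_succ_column_zero]
  simp [submatrix_submatrix, Function.comp_def, Fin.cycleRange_symm_succ]

theorem permanent_submatrix_eq_of_range_eq {m l : Type*} {n : ℕ} (A : Matrix m l R)
    {f g : Fin n → m} (hf : Function.Injective f) (hg : Function.Injective g)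
    (h : Set.range f = Set.range g) (c : Fin n → l) :
    (A.submatrix f c).permanent = (A.submatrix g c).permanent := by
  let τ : Perm (Fin n) :=
    (Equiv.ofInjective g hg).trans ((Equiv.setCongr h.symm).trans (Equiv.ofInjective f hf).symm)
  have hτ : f ∘ τ = g := funext fun x => by simp [τ, Equiv.apply_ofInjective_symm]
  rw [← permanent_permute_cols τ, submatrix_submatrix, Function.comp_id, hτ]

end Matrix

/-- For nonzero `x`, `y`: the angle between `x` and `y` is at most `arccos c`. -/
def CosAngleGE (c : ℝ) (x y : ℂ) : Prop :=
  c * (‖x‖ * ‖y‖) ≤ ⟪x, y⟫_ℝ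

namespace CosAngleGE

theorem self {c : ℝ} (hc : c ≤ 1) (x : ℂ) : CosAngleGE c x x := by
  unfold CosAngleGE
  rw [real_inner_self_eq_norm_sq]
  nlinarith [norm_nonneg x]

theorem mul_left {c : ℝ} {x y : ℂ} (h : CosAngleGE c x y) (s : ℂ) :
    CosAngleGE c (s * x) (s * y) := by
  have hinner : ⟪s * x, s * y⟫_ℝ = ‖s‖ ^ 2 * ⟪x, y⟫_ℝ := by
    simp only [Complex.inner, map_mul, ← Complex.normSq_eq_norm_sq]
    rw [show s * y * (conj s * conj x) = (s * conj s) * (y * conj x) by ring, Complex.mul_conj,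
      Complex.re_ofReal_mul]
  unfold CosAngleGE at *
  rw [hinner, norm_mul, norm_mul]
  nlinarith [sq_nonneg ‖s‖]

theorem mono {c c' : ℝ} {x y : ℂ} (h : CosAngleGE c x y) (hc : c' ≤ c) :
    CosAngleGE c' x y :=
  le_trans (by gcongr) h

end CosAngleGE

theorem sq_im_le_and_le_sq_re_of_norm_le {p : ℂ} {η : ℝ} (hp : ‖p‖ ≤ η) (hη : η ≤ 1) :
    (1 + p).im ^ 2 ≤ η ^ 2 * ‖1 + p‖ ^ 2 ∧ (1 - η ^ 2) * ‖1 + p‖ ^ 2 ≤ (1 + p).re ^ 2 := by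
  have hpη : p.re ^ 2 + p.im ^ 2 ≤ η ^ 2 := by
    have := pow_le_pow_left₀ (norm_nonneg p) hp 2
    rw [Complex.sq_norm, Complex.normSq_apply] at this
    nlinarith
  have hη2 : 0 ≤ 1 - η ^ 2 := by nlinarith [norm_nonneg p]
  rw [Complex.sq_norm, Complex.normSq_apply]
  simp only [Complex.add_re, Complex.add_im, Complex.one_re, Complex.one_im, zero_add]
  constructor <;> nlinarith [sq_nonneg (p.re + η ^ 2), mul_nonneg hη2 (sub_nonneg.2 hpη)]

theorem one_sub_norm_le_re_one_add (p : ℂ) : 1 - ‖p‖ ≤ (1 + p).re := by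
  simp only [Complex.add_re, Complex.one_re]
  linarith [neg_abs_le p.re, Complex.abs_re_le_norm p]

theorem cosAngleGE_one_add {p q : ℂ} {η : ℝ} (hp : ‖p‖ ≤ η) (hq : ‖q‖ ≤ η) (hη : η ≤ 1) :
    CosAngleGE (1 - 2 * η ^ 2) (1 + p) (1 + q) := by
  obtain ⟨hxi, hxr⟩ := sq_im_le_and_le_sq_re_of_norm_le hp hη
  obtain ⟨hyi, hyr⟩ := sq_im_le_and_le_sq_re_of_norm_le hq hη
  set x := 1 + p
  set y := 1 + q
  have hη0 : 0 ≤ η := (norm_nonneg p).trans hp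
  have hη2 : 0 ≤ 1 - η ^ 2 := by nlinarith
  have hre : (1 - η ^ 2) * (‖x‖ * ‖y‖) ≤ x.re * y.re := by
    have hx0 := one_sub_norm_le_re_one_add p
    have hy0 := one_sub_norm_le_re_one_add q
    refine le_of_sq_le_sq ?_ (mul_nonneg (by linarith) (by linarith))
    calc ((1 - η ^ 2) * (‖x‖ * ‖y‖)) ^ 2 = ((1 - η ^ 2) * ‖x‖ ^ 2) * ((1 - η ^ 2) * ‖y‖ ^ 2) := by
          ring
      _ ≤ x.re ^ 2 * y.re ^ 2 := mul_le_mul hxr hyr (by positivity) (sq_nonneg _)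
      _ = (x.re * y.re) ^ 2 := by ring
  have him : -(η ^ 2 * (‖x‖ * ‖y‖)) ≤ x.im * y.im := by
    refine (abs_le_of_sq_le_sq' ?_ (by positivity)).1
    calc (x.im * y.im) ^ 2 = x.im ^ 2 * y.im ^ 2 := by ring
      _ ≤ (η ^ 2 * ‖x‖ ^ 2) * (η ^ 2 * ‖y‖ ^ 2) := mul_le_mul hxi hyi (sq_nonneg _) (by positivity)
      _ = (η ^ 2 * (‖x‖ * ‖y‖)) ^ 2 := by ring
  have hinner : ⟪x, y⟫_ℝ = x.re * y.re + x.im * y.im := by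
    simp only [Complex.inner, Complex.mul_re, Complex.conj_re, Complex.conj_im]; ring
  unfold CosAngleGE
  rw [hinner]
  linarith

theorem mul_sum_norm_le_norm_sum {ι : Type*} [Fintype ι] {c : ℝ} {u : ι → ℂ}
    (hu : ∀ j k, CosAngleGE c (u j) (u k)) {j₀ : ι} (hj₀ : u j₀ ≠ 0) :
    c * ∑ j, ‖u j‖ ≤ ‖∑ j, u j‖ := by
  refine le_of_mul_le_mul_right ?_ (norm_pos_iff.2 hj₀)
  calc c * (∑ j, ‖u j‖) * ‖u j₀‖ = ∑ j, c * (‖u j‖ * ‖u j₀‖) := by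
        simp only [mul_sum, sum_mul, mul_assoc]
    _ ≤ ∑ j, ⟪u j, u j₀⟫_ℝ := sum_le_sum fun j _ => hu j j₀
    _ = ⟪∑ j, u j, u j₀⟫_ℝ := (sum_inner _ _ _).symm
    _ ≤ ‖∑ j, u j‖ * ‖u j₀‖ := real_inner_le_norm _ _

theorem exists_sum_mul_eq_sum_mul_one_add {ι : Type*} [Fintype ι] {ε c : ℝ} (hc : 0 < c)
    {u a : ι → ℂ} (ha : ∀ j, ‖a j - 1‖ ≤ ε) (hS : c * ∑ j, ‖u j‖ ≤ ‖∑ j, u j‖)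
    (hS0 : ∑ j, u j ≠ 0) :
    ∃ p : ℂ, ‖p‖ ≤ ε / c ∧ ∑ j, a j * u j = (∑ j, u j) * (1 + p) := by
  obtain ⟨j₀, -, -⟩ := Finset.exists_ne_zero_of_sum_ne_zero hS0
  have hε : 0 ≤ ε := (norm_nonneg _).trans (ha j₀)
  set e := ∑ j, (a j - 1) * u j
  have he : ‖e‖ ≤ ε * ∑ j, ‖u j‖ := by
    refine (norm_sum_le _ _).trans ?_
    rw [mul_sum]
    refine sum_le_sum fun j _ => ?_
    rw [norm_mul]
    exact mul_le_mul_of_nonneg_right (ha j) (norm_nonneg _)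
  refine ⟨e / ∑ j, u j, ?_, ?_⟩
  · rw [norm_div, div_le_div_iff₀ (norm_pos_iff.2 hS0) hc]
    nlinarith
  · have : ∑ j, a j * u j = ∑ j, u j + e := by
      rw [← sum_add_distrib]
      exact sum_congr rfl fun j _ => by ring
    rw [this]
    field_simp

theorem sum_mul_ne_zero_and_cosAngleGE {ι : Type*} [Fintype ι] {ε c : ℝ} (hc : 0 < c)
    (hcε : c ≤ 1 - 2 * (ε / c) ^ 2) {u a b : ι → ℂ} (hu : ∀ j k, CosAngleGE c (u j) (u k))
    {j₀ : ι} (hj₀ : u j₀ ≠ 0) (ha : ∀ j, ‖a j - 1‖ ≤ ε) (hb : ∀ j, ‖b j - 1‖ ≤ ε) :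
    ∑ j, a j * u j ≠ 0 ∧ CosAngleGE c (∑ j, a j * u j) (∑ j, b j * u j) := by
  have hη : ε / c < 1 := by nlinarith
  have hS := mul_sum_norm_le_norm_sum hu hj₀
  have hS0 : ∑ j, u j ≠ 0 := by
    have hT : ‖u j₀‖ ≤ ∑ j, ‖u j‖ :=
      single_le_sum (f := fun j => ‖u j‖) (fun j _ => norm_nonneg _) (mem_univ j₀)
    rw [← norm_pos_iff]
    nlinarith [norm_pos_iff.2 hj₀]
  obtain ⟨p, hp, hap⟩ := exists_sum_mul_eq_sum_mul_one_add hc ha hS hS0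
  obtain ⟨q, hq, hbq⟩ := exists_sum_mul_eq_sum_mul_one_add hc hb hS hS0
  have hp0 : 1 + p ≠ 0 := fun h => by
    have := one_sub_norm_le_re_one_add p
    rw [h, Complex.zero_re] at this
    linarith
  rw [hap, hbq]
  exact ⟨mul_ne_zero hS0 hp0,
    ((cosAngleGE_one_add hp hq hη.le).mono hcε).mul_left _⟩

open Matrix

theorem Fin.range_swap_comp_succAbove {n : ℕ} (i k : Fin (n + 1)) :
    Set.range (Equiv.swap i k ∘ k.succAbove) = Set.range i.succAbove := by
  rw [Set.range_comp, Fin.range_succAbove, Fin.range_succAbove,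
    Set.image_compl_eq (Equiv.swap i k).bijective, Set.image_singleton, Equiv.swap_apply_right]

def PermanentsAligned (ε c : ℝ) (n : ℕ) : Prop :=
  ∀ Z Z' : Matrix (Fin n) (Fin n) ℂ, (∀ i j, ‖Z i j - 1‖ ≤ ε) → (∀ i j, ‖Z' i j - 1‖ ≤ ε) →
    {i | Z i ≠ Z' i}.Subsingleton → Z.permanent ≠ 0 ∧ CosAngleGE c Z.permanent Z'.permanent

section

variable {ε c : ℝ} (hc : 0 < c) (hcε : c ≤ 1 - 2 * (ε / c) ^ 2)
include hc hcε

theorem PermanentsAligned.of_eq_off_column {n : ℕ} (ih : PermanentsAligned ε c n)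
    {Z Z' : Matrix (Fin (n + 1)) (Fin (n + 1)) ℂ} (hZ : ∀ i j, ‖Z i j - 1‖ ≤ ε)
    (hZ' : ∀ i j, ‖Z' i j - 1‖ ≤ ε) {r : Fin (n + 1)} (hr : ∀ i j, j ≠ r → Z i j = Z' i j) :
    Z.permanent ≠ 0 ∧ CosAngleGE c Z.permanent Z'.permanent := by
  set u : Fin (n + 1) → ℂ := fun i => (Z.submatrix i.succAbove r.succAbove).permanent
  have hminor (i : Fin (n + 1)) :
      Z'.submatrix i.succAbove r.succAbove = Z.submatrix i.succAbove r.succAbove := by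
    ext k l
    exact (hr _ _ (Fin.succAbove_ne r l)).symm
  have hu (i k : Fin (n + 1)) : u i ≠ 0 ∧ CosAngleGE c (u i) (u k) := by
    -- Reordering rows, minor `i` is minor `k` with its row `i` replaced by row `k`.
    rw [show u i = (Z.submatrix (Equiv.swap i k ∘ k.succAbove) r.succAbove).permanent from
      permanent_submatrix_eq_of_range_eq Z Fin.succAbove_right_injective
        ((Equiv.swap i k).injective.comp Fin.succAbove_right_injective)
        (Fin.range_swap_comp_succAbove i k).symm _]
    refine ih _ _ (fun _ _ => hZ _ _) (fun _ _ => hZ _ _) ?_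
    refine (Set.subsingleton_singleton.preimage Fin.succAbove_right_injective :
      (k.succAbove ⁻¹' {i}).Subsingleton).anti fun m hm => ?_
    by_contra hki
    exact hm (funext fun l => by
      simp only [submatrix_apply, Function.comp_apply,
        Equiv.swap_apply_of_ne_of_ne hki (Fin.succAbove_ne k m)])
  have hexp' : Z'.permanent = ∑ i, Z' i r * u i := by
    simp_rw [permanent_succ_column Z' r, hminor, u]
  rw [permanent_succ_column Z r, hexp']
  exact sum_mul_ne_zero_and_cosAngleGE hc hcε (fun i k => (hu i k).2) (hu 0 0).1
    (fun i => hZ i r) (fun i => hZ' i r)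

theorem PermanentsAligned.succ {n : ℕ} (ih : PermanentsAligned ε c n) :
    PermanentsAligned ε c (n + 1) := by
  intro Z Z' hZ hZ' hrows
  obtain ⟨r, hr⟩ : ∃ r, ∀ i, i ≠ r → Z i = Z' i := by
    rcases hrows.eq_empty_or_singleton with h | ⟨r, h⟩
    · exact ⟨0, fun i _ => by simpa using Set.eq_empty_iff_forall_notMem.1 h i⟩
    · exact ⟨r, fun i hi => by_contra fun hne => hi (h.subset hne)⟩
  rw [← permanent_transpose Z, ← permanent_transpose Z']
  exact ih.of_eq_off_column hc hcε (fun i j => hZ j i) (fun i j => hZ' j i)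
    fun i j hj => congrFun (hr j hj) i

theorem permanentsAligned (n : ℕ) : PermanentsAligned ε c n := by
  induction n with
  | zero =>
    intro Z Z' _ _ _
    simpa [permanent_isEmpty] using CosAngleGE.self (by nlinarith) 1
  | succ n ih => exact ih.succ hc hcε

end

theorem perm_eq_permanent {n : ℕ} (A : Matrix (Fin n) (Fin n) ℂ) : perm A = A.permanent := by
  rw [← permanent_transpose]
  rfl

theorem perm_ne_zero_of_close_to_one :
    ∃ δ : ℝ, 0 < δ ∧ δ = 0.195 ∧
      ∀ (n : ℕ) (Z : Matrix (Fin n) (Fin n) ℂ),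
        (∀ i j, ‖Z i j - 1‖ ≤ δ) → perm Z ≠ 0 := by
  refine ⟨0.195, by norm_num, rfl, fun n Z hZ => ?_⟩
  rw [perm_eq_permanent]
  exact (permanentsAligned (c := 0.9) (by norm_num) (by norm_num) n Z Z hZ hZ (by simp)).1
end

section
/- Fix δ ∈ (0,1) and τ ∈ (0,1). Suppose that every n × n complex matrix Z with |z_ij - 1| ≤ δ for all i,j satisfies per Z ≠ 0 and |per Z| ≥ τ Σ_{j=1}^n |z_{1j}| |per Z_j|, where Z_j is obtained by deleting row 1 and column j. Then for any two n × n matrices A, B in this polydisc that differ only in the first row, there is a continuous branch of log per along the segment from A to B, and |log per A - log per B| ≤ 2δ / ((1-δ)τ); in particular the angle between the complex numbers per A and per B is at most 2δ / ((1-δ)τ). -/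
/-!
Expanding along the first row, `per Z = ∑ⱼ z₁ⱼ per Zⱼ`, and the minors `Zⱼ` are the same for every
matrix on the segment `Zₜ = (1 - t) A + t B`; so `t ↦ per Zₜ` is affine, with constant derivative
`per B - per A = ∑ⱼ (b₁ⱼ - a₁ⱼ) per Aⱼ` of modulus at most `2δ ∑ⱼ |per Aⱼ|`. The polydisc is convex,
so the hypothesis applies to each `Zₜ` and gives `|per Zₜ| ≥ (1 - δ) τ ∑ⱼ |per Aⱼ|`. Hence the
segment from `per A` to `per B` avoids `0`, lies in an open half-plane carrying a holomorphic branch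
of `log`, and along it `|(log per Zₜ)'| ≤ 2δ / ((1 - δ) τ)`; the mean value inequality bounds the
increment of `log`, and its imaginary part bounds the angle.
-/

open Set Complex

theorem perm_succ_row_zero {n : ℕ} (Z : Matrix (Fin (n + 1)) (Fin (n + 1)) ℂ) :
    perm Z = ∑ j, Z 0 j * perm (Z.submatrix Fin.succ j.succAbove) := by
  rw [perm, Finset.univ_perm_fin_succ, ← Finset.univ_product_univ]
  simp only [Finset.sum_map, Equiv.toEmbedding_apply, Finset.sum_product]
  refine Finset.sum_congr rfl fun j _ => Fin.cases ?_ (fun j => ?_) j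
  · rw [perm, Finset.mul_sum]
    refine Finset.sum_congr rfl fun σ _ => ?_
    rw [Fin.prod_univ_succ]
    simp [Equiv.Perm.decomposeFin_symm_apply_succ, Fin.succAbove_zero]
  · -- `swap 0 j.succ ∘ Fin.succ = j.succ.succAbove ∘ j.cycleRange`
    rw [perm, Finset.mul_sum]
    refine Fintype.sum_equiv (Equiv.mulLeft j.cycleRange) _ _ fun σ => ?_
    rw [Fin.prod_univ_succ]
    simp only [Equiv.Perm.decomposeFin_symm_apply_zero, Equiv.Perm.decomposeFin_symm_apply_succ,
      Matrix.submatrix_apply, Equiv.coe_mulLeft, Equiv.Perm.coe_mul, Function.comp_apply,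
      Fin.succAbove_cycleRange]

section RowChange

variable {n : ℕ} {Z A B : Matrix (Fin (n + 1)) (Fin (n + 1)) ℂ}

theorem submatrix_succ_eq_of_rows_succ_eq (h : ∀ i : Fin n, Z i.succ = A i.succ)
    (f : Fin n → Fin (n + 1)) : Z.submatrix Fin.succ f = A.submatrix Fin.succ f := by
  ext i k
  simp [h]

theorem perm_eq_sum_mul_perm_minor_of_rows_succ_eq (h : ∀ i : Fin n, Z i.succ = A i.succ) :
    perm Z = ∑ j, Z 0 j * perm (A.submatrix Fin.succ j.succAbove) := by
  simp only [perm_succ_row_zero Z, submatrix_succ_eq_of_rows_succ_eq h]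

theorem sub_smul_add_smul_rows_succ_eq (hAB : ∀ i : Fin n, A i.succ = B i.succ) (t : ℝ)
    (i : Fin n) : ((1 - t) • A + t • B) i.succ = A i.succ := by
  ext j
  rw [Matrix.add_apply, Matrix.smul_apply, Matrix.smul_apply, ← congrFun (hAB i) j, ← add_smul,
    sub_add_cancel, one_smul]

theorem perm_sub_smul_add_smul_eq_lineMap (hAB : ∀ i : Fin n, A i.succ = B i.succ)
    (t : ℝ) : perm ((1 - t) • A + t • B) = AffineMap.lineMap (perm A) (perm B) t := by
  rw [AffineMap.lineMap_apply_module, perm_eq_sum_mul_perm_minor_of_rows_succ_eq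
    (sub_smul_add_smul_rows_succ_eq hAB t), perm_eq_sum_mul_perm_minor_of_rows_succ_eq
    (fun i => (hAB i).symm), perm_succ_row_zero A,
    Finset.smul_sum, Finset.smul_sum, ← Finset.sum_add_distrib]
  refine Finset.sum_congr rfl fun j _ => ?_
  simp only [Matrix.add_apply, Matrix.smul_apply, Complex.real_smul]
  ring

theorem perm_sub_perm_of_rows_succ_eq (hAB : ∀ i : Fin n, A i.succ = B i.succ) :
    perm B - perm A = ∑ j, (B 0 j - A 0 j) * perm (A.submatrix Fin.succ j.succAbove) := by
  rw [perm_eq_sum_mul_perm_minor_of_rows_succ_eq (fun i => (hAB i).symm),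
    perm_succ_row_zero A, ← Finset.sum_sub_distrib]
  simp only [sub_mul]

end RowChange

def polydisc (m : Type*) (δ : ℝ) : Set (Matrix m m ℂ) :=
  {Z | ∀ i j, ‖Z i j - 1‖ ≤ δ}

theorem convex_polydisc (m : Type*) (δ : ℝ) : Convex ℝ (polydisc m δ) := by
  intro A hA B hB a b ha hb hab i j
  have h := convex_closedBall (1 : ℂ) δ (x := A i j) (y := B i j)
    (by simpa [dist_eq_norm] using hA i j) (by simpa [dist_eq_norm] using hB i j) ha hb hab
  simpa [dist_eq_norm] using h

section WeightedSums

variable {ι : Type*} [Fintype ι] {δ : ℝ} {z a b M : ι → ℂ}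

theorem one_sub_mul_sum_norm_le_sum_norm_mul_norm (hz : ∀ j, ‖z j - 1‖ ≤ δ) :
    (1 - δ) * ∑ j, ‖M j‖ ≤ ∑ j, ‖z j‖ * ‖M j‖ := by
  rw [Finset.mul_sum]
  refine Finset.sum_le_sum fun j _ => mul_le_mul_of_nonneg_right ?_ (norm_nonneg _)
  have := norm_sub_norm_le (1 : ℂ) (z j)
  rw [norm_one, norm_sub_rev] at this
  linarith [hz j]

theorem norm_sum_sub_mul_le (ha : ∀ j, ‖a j - 1‖ ≤ δ) (hb : ∀ j, ‖b j - 1‖ ≤ δ) :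
    ‖∑ j, (b j - a j) * M j‖ ≤ 2 * δ * ∑ j, ‖M j‖ := by
  rw [Finset.mul_sum]
  refine (norm_sum_le _ _).trans (Finset.sum_le_sum fun j _ => ?_)
  rw [norm_mul]
  refine mul_le_mul_of_nonneg_right ?_ (norm_nonneg _)
  have := norm_sub_le_norm_sub_add_norm_sub (b j) 1 (a j)
  rw [norm_sub_rev 1] at this
  linarith [ha j, hb j]

end WeightedSums

theorem norm_perm_sub_perm_le {n : ℕ} {δ τ : ℝ} (hδ : 0 ≤ δ) (hδ1 : δ < 1) (hτ : 0 < τ)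
    {Z A B : Matrix (Fin (n + 1)) (Fin (n + 1)) ℂ} (hA : A ∈ polydisc _ δ)
    (hB : B ∈ polydisc _ δ) (hZ : Z ∈ polydisc _ δ) (hAB : ∀ i : Fin n, A i.succ = B i.succ)
    (hZA : ∀ i : Fin n, Z i.succ = A i.succ)
    (hτZ : τ * ∑ j, ‖Z 0 j‖ * ‖perm (Z.submatrix Fin.succ j.succAbove)‖ ≤ ‖perm Z‖) :
    ‖perm B - perm A‖ ≤ 2 * δ / ((1 - δ) * τ) * ‖perm Z‖ := by
  set S := ∑ j : Fin (n + 1), ‖perm (A.submatrix Fin.succ j.succAbove)‖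
  have hS : (1 - δ) * τ * S ≤ ‖perm Z‖ := by
    simp only [submatrix_succ_eq_of_rows_succ_eq hZA] at hτZ
    nlinarith [one_sub_mul_sum_norm_le_sum_norm_mul_norm
      (M := fun j => perm (A.submatrix Fin.succ j.succAbove)) (hZ 0)]
  have h1δ : 0 < 1 - δ := by linarith
  calc ‖perm B - perm A‖ ≤ 2 * δ * S := by
        rw [perm_sub_perm_of_rows_succ_eq hAB]
        exact norm_sum_sub_mul_le (hA 0) (hB 0)
    _ = 2 * δ / ((1 - δ) * τ) * ((1 - δ) * τ * S) := by field_simp [h1δ.ne', hτ.ne']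
    _ ≤ 2 * δ / ((1 - δ) * τ) * ‖perm Z‖ := by gcongr

theorem exists_re_mul_pos_of_zero_notMem {s : Set ℂ} (hs : Convex ℝ s) (hs' : IsClosed s)
    (h0 : (0 : ℂ) ∉ s) : ∃ c : ℂ, ∀ z ∈ s, 0 < (z * c).re := by
  obtain ⟨φ, u, hφ, hu⟩ := geometric_hahn_banach_closed_point hs hs' h0
  refine ⟨-starRingEnd ℂ ((InnerProductSpace.toDual ℝ ℂ).symm φ), fun z hz => ?_⟩
  have hφz := InnerProductSpace.toDual_symm_apply (x := z) (y := φ)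
  rw [Complex.inner] at hφz
  rw [map_zero] at hu
  rw [mul_neg, neg_re, hφz]
  linarith [hφ z hz]

theorem exists_continuous_log_lineMap {a b : ℂ} {K : ℝ} (h0 : (0 : ℂ) ∉ segment ℝ a b)
    (hK : ∀ t ∈ Icc (0 : ℝ) 1, ‖b - a‖ ≤ K * ‖AffineMap.lineMap a b t‖) :
    ∃ L : ℝ → ℂ, Continuous L ∧ (∀ t ∈ Icc (0 : ℝ) 1, exp (L t) = AffineMap.lineMap a b t) ∧
      ‖L 0 - L 1‖ ≤ K := by
  have hclosed : IsClosed (segment ℝ a b) := by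
    rw [← convexHull_pair]
    exact ((toFinite {a, b}).isCompact_convexHull ℝ).isClosed
  obtain ⟨c, hc⟩ := exists_re_mul_pos_of_zero_notMem (convex_segment a b) hclosed h0
  set f : ℝ → ℂ := ⇑(AffineMap.lineMap (k := ℝ) a b)
  have hf : ∀ t ∈ Icc (0 : ℝ) 1, f t ∈ segment ℝ a b := fun t ht => by
    rw [segment_eq_image_lineMap]
    exact mem_image_of_mem _ ht
  have hne : ∀ t ∈ Icc (0 : ℝ) 1, f t ≠ 0 := fun t ht h => h0 (h ▸ hf t ht)
  have hc0 : c ≠ 0 := by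
    rintro rfl
    simpa using hc a (left_mem_segment ℝ a b)
  -- multiplying by `c` moves the segment into the right half-plane, where `log` is holomorphic
  set g : ℝ → ℂ := fun t => log (f t * c)
  have hg : ∀ t ∈ Icc (0 : ℝ) 1, HasDerivAt g ((b - a) / f t) t := fun t ht => by
    have := (hasDerivAt_log (Or.inl (hc _ (hf t ht)))).comp t
      (AffineMap.hasDerivAt_lineMap.mul_const c)
    exact this.congr_deriv (by field_simp [hne t ht, hc0])
  refine ⟨fun t => g (projIcc 0 1 zero_le_one t) - log c, ?_, fun t ht => ?_, ?_⟩
  · exact (ContinuousOn.comp_continuous (fun t ht => (hg t ht).continuousAt.continuousWithinAt)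
      (continuous_subtype_val.comp continuous_projIcc) fun t => (projIcc 0 1 _ t).2).sub
      continuous_const
  · simp only [projIcc_of_mem _ ht, g, exp_sub, exp_log (mul_ne_zero (hne t ht) hc0),
      exp_log hc0, mul_div_cancel_right₀ _ hc0]
  · rw [norm_sub_rev]
    simp only [projIcc_left, projIcc_right, sub_sub_sub_cancel_right]
    refine norm_image_sub_le_of_norm_deriv_le_segment_01' (fun t ht => (hg t ht).hasDerivWithinAt)
      fun t ht => ?_
    rw [norm_div, div_le_iff₀ (norm_pos_iff.mpr (hne t (Ico_subset_Icc_self ht)))]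
    exact hK t (Ico_subset_Icc_self ht)

theorem Complex.abs_arg_exp_le_norm (z : ℂ) : |arg (exp z)| ≤ ‖z‖ := by
  rcases le_or_gt Real.pi ‖z‖ with h | h
  · exact (abs_arg_le_pi _).trans h
  · have him := abs_im_le_norm z
    rw [← log_im, log_exp (by linarith [neg_abs_le z.im]) (by linarith [le_abs_self z.im])]
    exact him

theorem angle_bound_of_row_change_general (n : ℕ) (δ τ : ℝ)
    (hδ : 0 < δ) (hδ1 : δ < 1) (hτ : 0 < τ)
    (H : ∀ Z : Matrix (Fin (n + 1)) (Fin (n + 1)) ℂ,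
      (∀ i j, ‖Z i j - 1‖ ≤ δ) →
        perm Z ≠ 0 ∧
        ‖perm Z‖ ≥
          τ * ∑ j, ‖Z 0 j‖ *
            ‖perm (Z.submatrix Fin.succ j.succAbove)‖)
    (A B : Matrix (Fin (n + 1)) (Fin (n + 1)) ℂ)
    (hA : ∀ i j, ‖A i j - 1‖ ≤ δ)
    (hB : ∀ i j, ‖B i j - 1‖ ≤ δ)
    (hAB : ∀ i, i ≠ 0 → ∀ j, A i j = B i j) :
    (∃ L : ℝ → ℂ, Continuous L ∧
        (∀ t ∈ Set.Icc (0 : ℝ) 1,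
          Complex.exp (L t) = perm ((1 - t) • A + t • B)) ∧
        ‖L 0 - L 1‖ ≤ 2 * δ / ((1 - δ) * τ)) ∧
      |Complex.arg (perm A / perm B)| ≤ 2 * δ / ((1 - δ) * τ) := by
  have hrows : ∀ i : Fin n, A i.succ = B i.succ := fun i => funext (hAB _ i.succ_ne_zero)
  have hpath := perm_sub_smul_add_smul_eq_lineMap hrows
  have hmem : ∀ t ∈ Icc (0 : ℝ) 1, (1 - t) • A + t • B ∈ polydisc _ δ := fun t ht =>
    convex_polydisc _ δ hA hB (by linarith [ht.2]) ht.1 (sub_add_cancel 1 t)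
  have h0 : (0 : ℂ) ∉ segment ℝ (perm A) (perm B) := by
    rw [segment_eq_image_lineMap]
    rintro ⟨t, ht, hzero⟩
    exact (H _ (hmem t ht)).1 (by rw [hpath, hzero])
  obtain ⟨L, hL, hexp, hLK⟩ := exists_continuous_log_lineMap h0 fun t ht => by
    rw [← hpath]
    exact norm_perm_sub_perm_le hδ.le hδ1 hτ hA hB (hmem t ht) hrows
      (sub_smul_add_smul_rows_succ_eq hrows t) (H _ (hmem t ht)).2
  refine ⟨⟨L, hL, fun t ht => by rw [hexp t ht, hpath], hLK⟩, ?_⟩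
  have hquot : perm A / perm B = exp (L 0 - L 1) := by
    rw [exp_sub, hexp 0 (left_mem_Icc.mpr zero_le_one), hexp 1 (right_mem_Icc.mpr zero_le_one),
      AffineMap.lineMap_apply_zero, AffineMap.lineMap_apply_one]
  rw [hquot]
  exact (abs_arg_exp_le_norm _).trans hLK

theorem angle_bound_of_row_change (n : ℕ) (δ τ : ℝ)
    (hδ : 0 < δ) (hδ1 : δ < 1) (hτ : 0 < τ) (hτ1 : τ < 1)
    (H : ∀ Z : Matrix (Fin (n + 1)) (Fin (n + 1)) ℂ,
      (∀ i j, ‖Z i j - 1‖ ≤ δ) →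
        perm Z ≠ 0 ∧
        ‖perm Z‖ ≥
          τ * ∑ j, ‖Z 0 j‖ *
            ‖perm (Z.submatrix Fin.succ j.succAbove)‖)
    (A B : Matrix (Fin (n + 1)) (Fin (n + 1)) ℂ)
    (hA : ∀ i j, ‖A i j - 1‖ ≤ δ)
    (hB : ∀ i j, ‖B i j - 1‖ ≤ δ)
    (hAB : ∀ i, i ≠ 0 → ∀ j, A i j = B i j) :
    (∃ L : ℝ → ℂ, Continuous L ∧
        (∀ t ∈ Set.Icc (0 : ℝ) 1,
          Complex.exp (L t) = perm ((1 - t) • A + t • B)) ∧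
        ‖L 0 - L 1‖ ≤ 2 * δ / ((1 - δ) * τ)) ∧
      |Complex.arg (perm A / perm B)| ≤ 2 * δ / ((1 - δ) * τ) :=
  angle_bound_of_row_change_general n δ τ hδ hδ1 hτ H A B hA hB hAB
end
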